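/- arXiv:2203.10411 — 4 statements merged into one kernel-verified Lean document; each statement's English description precedes it below -/
import Mathlib

section
/- Let Z be a countable set. For each n ∈ ℕ and z ∈ Z let λ_n(z) > 0 and (for n ≥ 1) μ_n(z) > 0, and set r_0(z) = 1 and r_n(z) = ∏_{k=1}^n (λ_{k-1}(z)/μ_k(z)). For each n ∈ ℕ let τ_n : Z × Z → ℝ satisfy τ_n(z, z') ≥ 0 for z' ≠ z, with (τ_n(z, z'))_{z' ≠ z} summable for each z. Let v : Z → [0, ∞) be such that for every n and z the family (v(z') τ_n(z', z))_{z'≠z} is summable and v(z) Σ_{z' ≠ z} τ_n(z, z') = Σ_{z' ≠ z} v(z') τ_n(z', z). Define η(n, z) = r_n(z) v(z). Then η satisfies the global balance equations of the generator matrix R with off-diagonal entries R[(n,z),(n+1,z)] = λ_n(z), R[(n,z),(n-1,z)] = μ_n(z), R[(n,z),(n,z')] = r_n(z)^{-1} τ_n(z, z') for z' ≠ z, and all other off-diagonal entries zero; namely, for every n ≥ 1 and z ∈ Z: η(n,z)·(λ_n(z) + μ_n(z) + r_n(z)^{-1} Σ_{z'≠z} τ_n(z,z')) = η(n-1,z)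 λ_{n-1}(z) + η(n+1,z) μ_{n+1}(z) + Σ_{z'≠z} η(n,z') r_n(z')^{-1} τ_n(z',z), and for n = 0 and every z ∈ Z: η(0,z)·(λ_0(z) + Σ_{z'≠z} τ_0(z,z')) = η(1,z) μ_1(z) + Σ_{z'≠z} η(0,z') τ_0(z',z). -/
/-!
The global balance at `(n, z)` splits into two balances that hold separately. Along the
birth-death direction, `r_{n+1}(z) μ_{n+1}(z) = r_n(z) λ_n(z)` is detailed balance, so the flux
across every edge `{(n, z), (n + 1, z)}` cancels. Along the environment, the factor `r_n(z')⁻¹`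
in the jump rates cancels the factor `r_n(z')` in `η(n, z')`, so the environment flux at level `n`
is that of `v` under the rates `τ_n`, which is balanced by assumption.
-/

open Finset

noncomputable def birthDeathRatio (a b : ℕ → ℝ) (n : ℕ) : ℝ :=
  ∏ k ∈ Icc 1 n, a (k - 1) / b k

@[simp]
theorem birthDeathRatio_zero (a b : ℕ → ℝ) : birthDeathRatio a b 0 = 1 := by
  simp [birthDeathRatio]

theorem birthDeathRatio_pos {a b : ℕ → ℝ} (ha : ∀ k, 0 < a k) (hb : ∀ k, 1 ≤ k → 0 < b k)
    (n : ℕ) : 0 < birthDeathRatio a b n :=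
  prod_pos fun k hk => div_pos (ha _) (hb k (mem_Icc.mp hk).1)

theorem birthDeathRatio_succ_mul {a b : ℕ → ℝ} {n : ℕ} (hb : b (n + 1) ≠ 0) :
    birthDeathRatio a b (n + 1) * b (n + 1) = birthDeathRatio a b n * a n := by
  rw [birthDeathRatio, prod_Icc_succ_top (by omega), Nat.add_sub_cancel, mul_assoc,
    div_mul_cancel₀ _ hb, birthDeathRatio]

theorem stmt_1_general {Z : Type*}
    (lam mu : ℕ → Z → ℝ)
    (hlam : ∀ n z, 0 < lam n z) (hmu : ∀ n z, 1 ≤ n → 0 < mu n z)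
    (r : ℕ → Z → ℝ)
    (hr : ∀ n z, r n z = ∏ k ∈ Finset.Icc 1 n, lam (k - 1) z / mu k z)
    (τ : ℕ → Z → Z → ℝ)
    (v : Z → ℝ)
    (hbal : ∀ n (z : Z),
      v z * ∑' z' : {w : Z // w ≠ z}, τ n z z'
        = ∑' z' : {w : Z // w ≠ z}, v z' * τ n z' z)
    (η : ℕ → Z → ℝ) (hη : ∀ n z, η n z = r n z * v z) :
    (∀ n (z : Z), 1 ≤ n →
      η n z * (lam n z + mu n z + (r n z)⁻¹ * ∑' z' : {w : Z // w ≠ z}, τ n z z')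
        = η (n - 1) z * lam (n - 1) z + η (n + 1) z * mu (n + 1) z
          + ∑' z' : {w : Z // w ≠ z}, η n z' * (r n z')⁻¹ * τ n z' z) ∧
    (∀ z : Z,
      η 0 z * (lam 0 z + ∑' z' : {w : Z // w ≠ z}, τ 0 z z')
        = η 1 z * mu 1 z + ∑' z' : {w : Z // w ≠ z}, η 0 z' * τ 0 z' z) := by
  have hr_pos n z : 0 < r n z :=
    hr n z ▸ birthDeathRatio_pos (hlam · z) (hmu · z) n
  have hr_zero z : r 0 z = 1 := hr 0 z ▸ birthDeathRatio_zero (lam · z) (mu · z)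
  have hdetailed n z : r (n + 1) z * mu (n + 1) z = r n z * lam n z := by
    rw [hr, hr]
    exact birthDeathRatio_succ_mul (a := (lam · z)) (hmu (n + 1) z n.succ_pos).ne'
  have henv n z : ∑' z' : {w : Z // w ≠ z}, η n z' * (r n z')⁻¹ * τ n z' z
      = ∑' z' : {w : Z // w ≠ z}, v z' * τ n z' z :=
    tsum_congr fun z' => by rw [hη, mul_comm (r n z'), mul_inv_cancel_right₀ (hr_pos n z').ne']
  refine ⟨fun n z hn => ?_, fun z => ?_⟩
  · obtain ⟨m, rfl⟩ := Nat.exists_eq_add_of_le' hn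
    rw [henv, ← hbal, hη, hη, hη, Nat.add_sub_cancel]
    linear_combination v z * hdetailed m z - v z * hdetailed (m + 1) z
      + (v z * ∑' z' : {w : Z // w ≠ z}, τ (m + 1) z z') * mul_inv_cancel₀ (hr_pos (m + 1) z).ne'
  · simp only [hη, hr_zero, one_mul, ← hbal]
    linear_combination -v z * hdetailed 0 z - v z * lam 0 z * hr_zero z

/-- Global balance equations for the measure `η(n,z) = r_n(z) v(z)` of a
birth-death process in an interactive jump random environment. -/
theorem stmt_1 {Z : Type*} [Countable Z]
    (lam mu : ℕ → Z → ℝ)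
    (hlam : ∀ n z, 0 < lam n z) (hmu : ∀ n z, 1 ≤ n → 0 < mu n z)
    (r : ℕ → Z → ℝ)
    (hr : ∀ n z, r n z = ∏ k ∈ Finset.Icc 1 n, lam (k - 1) z / mu k z)
    (τ : ℕ → Z → Z → ℝ)
    (hτnn : ∀ n z z', z' ≠ z → 0 ≤ τ n z z')
    (hτsum : ∀ n (z : Z), Summable (fun z' : {w : Z // w ≠ z} => τ n z z'))
    (v : Z → ℝ) (hv : ∀ z, 0 ≤ v z)
    (hvsum : ∀ n (z : Z), Summable (fun z' : {w : Z // w ≠ z} => v z' * τ n z' z))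
    (hbal : ∀ n (z : Z),
      v z * ∑' z' : {w : Z // w ≠ z}, τ n z z'
        = ∑' z' : {w : Z // w ≠ z}, v z' * τ n z' z)
    (η : ℕ → Z → ℝ) (hη : ∀ n z, η n z = r n z * v z) :
    (∀ n (z : Z), 1 ≤ n →
      η n z * (lam n z + mu n z + (r n z)⁻¹ * ∑' z' : {w : Z // w ≠ z}, τ n z z')
        = η (n - 1) z * lam (n - 1) z + η (n + 1) z * mu (n + 1) z
          + ∑' z' : {w : Z // w ≠ z}, η n z' * (r n z')⁻¹ * τ n z' z) ∧
    (∀ z : Z,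
      η 0 z * (lam 0 z + ∑' z' : {w : Z // w ≠ z}, τ 0 z z')
        = η 1 z * mu 1 z + ∑' z' : {w : Z // w ≠ z}, η 0 z' * τ 0 z' z) :=
  stmt_1_general lam mu hlam hmu r hr τ v hbal η hη
end

section
/- Let K ≥ 1 be an integer, α₁, α₂, α₃ > 0, μ₀ > 0 and γ₀ > 1/α₁. Then ∫_{(0,∞)×(μ₀,∞)×(γ₀,∞)} ( Σ_{n=0}^{K-1} (z₁/z₂)^n/n! + ((z₁/z₂)^K/K!)·e^{z₁/z₃} ) · α₁ α₂ α₃ e^{-α₁ z₁ - α₂ (z₂ - μ₀) - α₃ (z₃ - γ₀)} dz₁ dz₂ dz₃ < ∞. -/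
/-!
On the domain, `z₁ / z₂ ≤ z₁ / μ₀` and `z₁ / z₃ ≤ z₁ / γ₀`, and the truncated exponential series
satisfies `∑_{n<K} xⁿ/n! + (xᴷ/K!) eʸ ≤ (1 + x)ᴷ eʸ`. So the integrand is dominated by the product of
`α₁ (1 + z₁/μ₀)ᴷ e^{-(α₁ - 1/γ₀) z₁}` with two shifted exponential densities in `z₂` and `z₃`.
The first factor is integrable exactly because `α₁ > 1/γ₀`, and an iterated integral dominated by a
product of integrable functions is finite.
-/

open MeasureTheory Set Real

open scoped ENNReal

section IteratedLIntegral

variable {α β γ : Type*} [MeasurableSpace α] [MeasurableSpace β] [MeasurableSpace γ]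
  {μ : Measure α} {ν : Measure β} {ρ : Measure γ}

theorem lintegral_lintegral_lintegral_le_mul {F : α → β → γ → ℝ≥0∞} {f : α → ℝ≥0∞}
    {g : β → ℝ≥0∞} {h : γ → ℝ≥0∞} (hf : AEMeasurable f μ) (hg : AEMeasurable g ν)
    (hh : AEMeasurable h ρ) (hF : ∀ᵐ x ∂μ, ∀ᵐ y ∂ν, ∀ᵐ z ∂ρ, F x y z ≤ f x * g y * h z) :
    ∫⁻ x, ∫⁻ y, ∫⁻ z, F x y z ∂ρ ∂ν ∂μ ≤ (∫⁻ x, f x ∂μ) * (∫⁻ y, g y ∂ν) * ∫⁻ z, h z ∂ρ := by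
  calc ∫⁻ x, ∫⁻ y, ∫⁻ z, F x y z ∂ρ ∂ν ∂μ
      ≤ ∫⁻ x, ∫⁻ y, ∫⁻ z, f x * g y * h z ∂ρ ∂ν ∂μ := by
        refine lintegral_mono_ae (hF.mono fun x hx => ?_)
        exact lintegral_mono_ae (hx.mono fun y hy => lintegral_mono_ae hy)
    _ = ∫⁻ x, f x * (∫⁻ y, g y ∂ν) * ∫⁻ z, h z ∂ρ ∂μ := by
        refine lintegral_congr fun x => ?_
        simp only [lintegral_const_mul'' _ hh]
        rw [lintegral_mul_const'' _ (hg.const_mul _), lintegral_const_mul'' _ hg]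
    _ = (∫⁻ x, f x ∂μ) * (∫⁻ y, g y ∂ν) * ∫⁻ z, h z ∂ρ := by
        rw [lintegral_mul_const'' _ (hf.mul_const _), lintegral_mul_const'' _ hf]

theorem lintegral_lintegral_lintegral_ofReal_lt_top {F : α → β → γ → ℝ} {f : α → ℝ}
    {g : β → ℝ} {h : γ → ℝ} (hf : Integrable f μ) (hg : Integrable g ν) (hh : Integrable h ρ)
    (hF : ∀ᵐ x ∂μ, ∀ᵐ y ∂ν, ∀ᵐ z ∂ρ, F x y z ≤ f x * g y * h z) :
    ∫⁻ x, ∫⁻ y, ∫⁻ z, ENNReal.ofReal (F x y z) ∂ρ ∂ν ∂μ < ∞ := by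
  have hF' : ∀ᵐ x ∂μ, ∀ᵐ y ∂ν, ∀ᵐ z ∂ρ, ENNReal.ofReal (F x y z) ≤ ‖f x‖ₑ * ‖g y‖ₑ * ‖h z‖ₑ := by
    filter_upwards [hF] with x hx
    filter_upwards [hx] with y hy
    filter_upwards [hy] with z hz
    simp only [Real.enorm_eq_ofReal_abs]
    rw [← ENNReal.ofReal_mul (by positivity), ← ENNReal.ofReal_mul (by positivity),
      ← abs_mul, ← abs_mul]
    exact ENNReal.ofReal_le_ofReal (hz.trans (le_abs_self _))
  refine (lintegral_lintegral_lintegral_le_mul hf.1.enorm hg.1.enorm hh.1.enorm hF').trans_lt ?_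
  exact ENNReal.mul_lt_top (ENNReal.mul_lt_top hf.2 hg.2) hh.2

end IteratedLIntegral

theorem integrableOn_exp_neg_mul_sub_Ioi (c : ℝ) {a : ℝ} (ha : 0 < a) :
    IntegrableOn (fun z => exp (-a * (z - c))) (Ioi c) := by
  refine IntegrableOn.congr_fun ((exp_neg_integrableOn_Ioi c ha).const_mul (exp (a * c)))
    (fun z _ => ?_) measurableSet_Ioi
  rw [← exp_add]
  ring_nf

theorem integrableOn_pow_mul_exp_neg_mul_Ioi (n : ℕ) {δ : ℝ} (hδ : 0 < δ) :
    IntegrableOn (fun z : ℝ => z ^ n * exp (-δ * z)) (Ioi 0) := by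
  have hs : (-1 : ℝ) < n := neg_one_lt_zero.trans_le n.cast_nonneg
  refine (integrableOn_rpow_mul_exp_neg_mul_rpow hs zero_lt_one hδ).congr_fun
    (fun z _ => ?_) measurableSet_Ioi
  simp only [Real.rpow_natCast, Real.rpow_one]

theorem integrableOn_one_add_div_pow_mul_exp_neg_mul_Ioi (K : ℕ) (c : ℝ) {δ : ℝ} (hδ : 0 < δ) :
    IntegrableOn (fun z : ℝ => (1 + z / c) ^ K * exp (-δ * z)) (Ioi 0) := by
  have hexpand : ∀ z : ℝ, (1 + z / c) ^ K * exp (-δ * z)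
      = ∑ n ∈ Finset.range (K + 1), (K.choose n / c ^ n) * (z ^ n * exp (-δ * z)) := by
    intro z
    rw [add_comm (1 : ℝ), add_pow, Finset.sum_mul]
    refine Finset.sum_congr rfl fun n _ => ?_
    rw [div_pow]
    ring
  simp_rw [hexpand]
  exact integrable_finsetSum _ fun n _ =>
    (integrableOn_pow_mul_exp_neg_mul_Ioi n hδ).const_mul _

theorem sum_range_succ_pow_div_factorial_le_one_add_pow (K : ℕ) {x : ℝ} (hx : 0 ≤ x) :
    ∑ n ∈ Finset.range (K + 1), x ^ n / n.factorial ≤ (1 + x) ^ K := by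
  rw [add_comm (1 : ℝ), add_pow]
  refine Finset.sum_le_sum fun n hn => ?_
  have hchoose : (1 : ℝ) ≤ K.choose n := by
    exact_mod_cast Nat.choose_pos (Nat.lt_succ_iff.mp (Finset.mem_range.mp hn))
  calc x ^ n / n.factorial ≤ x ^ n := div_le_self (by positivity) (by exact_mod_cast n.factorial_pos)
    _ ≤ x ^ n * 1 ^ (K - n) * K.choose n := by
        rw [one_pow, mul_one]; exact le_mul_of_one_le_right (by positivity) hchoose

theorem sum_range_pow_div_factorial_add_mul_exp_le (K : ℕ) {x y : ℝ} (hx : 0 ≤ x) (hy : 0 ≤ y) :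
    ∑ n ∈ Finset.range K, x ^ n / n.factorial + x ^ K / K.factorial * exp y
      ≤ (1 + x) ^ K * exp y := by
  have hsum : ∑ n ∈ Finset.range K, x ^ n / n.factorial
      ≤ (∑ n ∈ Finset.range K, x ^ n / n.factorial) * exp y :=
    le_mul_of_one_le_right (by positivity) (one_le_exp hy)
  calc _ ≤ (∑ n ∈ Finset.range (K + 1), x ^ n / n.factorial) * exp y := by
        rw [Finset.sum_range_succ, add_mul]; linarith
    _ ≤ (1 + x) ^ K * exp y := by
        gcongr; exact sum_range_succ_pow_div_factorial_le_one_add_pow K hx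

theorem stmt_11_general (K : ℕ) (α₁ α₂ α₃ μ₀ γ₀ : ℝ)
    (hα₁ : 0 < α₁) (hα₂ : 0 < α₂) (hα₃ : 0 < α₃)
    (hμ₀ : 0 < μ₀) (hγ₀ : 1 / α₁ < γ₀) :
    ∫⁻ z₁ in Set.Ioi (0 : ℝ), ∫⁻ z₂ in Set.Ioi μ₀, ∫⁻ z₃ in Set.Ioi γ₀,
        ENNReal.ofReal
          ((∑ n ∈ Finset.range K, (z₁ / z₂) ^ n / n.factorial
              + (z₁ / z₂) ^ K / K.factorial * Real.exp (z₁ / z₃))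
            * (α₁ * α₂ * α₃
              * Real.exp (-α₁ * z₁ - α₂ * (z₂ - μ₀) - α₃ * (z₃ - γ₀))))
      < ⊤ := by
  have hγ₀pos : 0 < γ₀ := (one_div_pos.mpr hα₁).trans hγ₀
  have hδ : 0 < α₁ - 1 / γ₀ := sub_pos.mpr ((one_div_lt hα₁ hγ₀pos).mp hγ₀)
  refine lintegral_lintegral_lintegral_ofReal_lt_top
    (f := fun z => α₁ * ((1 + z / μ₀) ^ K * exp (-(α₁ - 1 / γ₀) * z)))
    (g := fun z => α₂ * exp (-α₂ * (z - μ₀))) (h := fun z => α₃ * exp (-α₃ * (z - γ₀)))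
    ((integrableOn_one_add_div_pow_mul_exp_neg_mul_Ioi K μ₀ hδ).const_mul _)
    ((integrableOn_exp_neg_mul_sub_Ioi μ₀ hα₂).const_mul _)
    ((integrableOn_exp_neg_mul_sub_Ioi γ₀ hα₃).const_mul _) ?_
  filter_upwards [ae_restrict_mem measurableSet_Ioi] with z₁ (hz₁ : 0 < z₁)
  filter_upwards [ae_restrict_mem measurableSet_Ioi] with z₂ (hz₂ : μ₀ < z₂)
  filter_upwards [ae_restrict_mem measurableSet_Ioi] with z₃ (hz₃ : γ₀ < z₃)
  have hx : 0 ≤ z₁ / z₂ := div_nonneg hz₁.le (hμ₀.trans hz₂).le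
  have hweight := sum_range_pow_div_factorial_add_mul_exp_le K hx
    (div_nonneg hz₁.le (hγ₀pos.trans hz₃).le)
  have hmono : (1 + z₁ / z₂) ^ K * exp (z₁ / z₃) ≤ (1 + z₁ / μ₀) ^ K * exp (z₁ / γ₀) := by
    gcongr
  calc _ ≤ (1 + z₁ / μ₀) ^ K * exp (z₁ / γ₀)
        * (α₁ * α₂ * α₃ * exp (-α₁ * z₁ - α₂ * (z₂ - μ₀) - α₃ * (z₃ - γ₀))) := by
        gcongr; exact hweight.trans hmono
    _ = _ := by
        have hexp : exp (z₁ / γ₀) * exp (-α₁ * z₁ - α₂ * (z₂ - μ₀) - α₃ * (z₃ - γ₀))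
            = exp (-(α₁ - 1 / γ₀) * z₁) * exp (-α₂ * (z₂ - μ₀)) * exp (-α₃ * (z₃ - γ₀)) := by
          simp only [← exp_add]; ring_nf
        linear_combination (1 + z₁ / μ₀) ^ K * α₁ * α₂ * α₃ * hexp

/-- Finiteness of the normalizing constant for the M/M/K+M queue with
three-dimensional RBM rates. -/
theorem stmt_11 (K : ℕ) (hK : 1 ≤ K) (α₁ α₂ α₃ μ₀ γ₀ : ℝ)
    (hα₁ : 0 < α₁) (hα₂ : 0 < α₂) (hα₃ : 0 < α₃)
    (hμ₀ : 0 < μ₀) (hγ₀ : 1 / α₁ < γ₀) :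
    ∫⁻ z₁ in Set.Ioi (0 : ℝ), ∫⁻ z₂ in Set.Ioi μ₀, ∫⁻ z₃ in Set.Ioi γ₀,
        ENNReal.ofReal
          ((∑ n ∈ Finset.range K, (z₁ / z₂) ^ n / n.factorial
              + (z₁ / z₂) ^ K / K.factorial * Real.exp (z₁ / z₃))
            * (α₁ * α₂ * α₃
              * Real.exp (-α₁ * z₁ - α₂ * (z₂ - μ₀) - α₃ * (z₃ - γ₀))))
      < ⊤ :=
  stmt_11_general K α₁ α₂ α₃ μ₀ γ₀ hα₁ hα₂ hα₃ hμ₀ hγ₀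
end

section
/- Fix constants α > 1 and β, γ > 0. Let ξ and η be independent random variables on a probability space such that ξ has the exponential distribution with rate β, η > 0 almost surely, and P(η > u) ≤ α e^{-γ u} for all u ≥ 0. Then P(η < ξ) ≥ α^{-β/γ} · γ/(β + γ). -/
open MeasureTheory ProbabilityTheory
open scoped ENNReal

section aux
open Real Set Filter Topology

lemma aux_int {b : ℝ} (hb : 0 < b) (a : ℝ) :
    ∫ x in Set.Ioi a, Real.exp (-(b*x)) = Real.exp (-(b*a)) / b := by
  have hderiv : ∀ x ∈ Ici a, HasDerivAt (fun x => -Real.exp (-(b*x)) / b)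
      (Real.exp (-(b*x))) x := by
    intro x _
    have := (ProbabilityTheory.hasDerivAt_neg_exp_mul_exp (r := b) (x := x)).div_const b
    simpa [mul_div_assoc, mul_div_cancel_left₀ _ hb.ne'] using this
  have hint : IntegrableOn (fun x => Real.exp (-(b*x))) (Ioi a) := by
    simpa [neg_mul] using exp_neg_integrableOn_Ioi a hb
  have htend : Tendsto (fun x => -Real.exp (-(b*x)) / b) atTop (𝓝 0) := by
    have h1 : Tendsto (fun x : ℝ => -(b*x)) atTop atBot := by
      exact tendsto_neg_atBot_iff.mpr (tendsto_id.const_mul_atTop hb)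
    have := (Real.tendsto_exp_atBot.comp h1).neg.div_const b
    simpa using this
  have := integral_Ioi_of_hasDerivAt_of_tendsto' hderiv hint htend
  rw [this]; field_simp; ring

lemma aux_val {α β γ : ℝ} (hα : 1 < α) (hβ : 0 < β) (hγ : 0 < γ) :
    ∫ t in Set.Ioi (Real.log α / γ), β * Real.exp (-(β*t)) * (1 - α * Real.exp (-(γ*t)))
      = α ^ (-(β/γ)) * (γ/(β+γ)) := by
  set s0 := Real.log α / γ with hs0
  have hα0 : (0:ℝ) < α := lt_trans one_pos hα
  have hbg : 0 < β + γ := by linarith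
  have key : ∀ t : ℝ, β * Real.exp (-(β*t)) * (1 - α * Real.exp (-(γ*t)))
      = β * Real.exp (-(β*t)) - (α*β) * Real.exp (-((β+γ)*t)) := by
    intro t
    rw [show -((β+γ)*t) = -(β*t) + -(γ*t) by ring, Real.exp_add]; ring
  simp_rw [key]
  have h1 : IntegrableOn (fun t => β * Real.exp (-(β*t))) (Ioi s0) := by
    exact Integrable.const_mul (by simpa [neg_mul, IntegrableOn] using exp_neg_integrableOn_Ioi s0 hβ) β
  have h2 : IntegrableOn (fun t => (α*β) * Real.exp (-((β+γ)*t))) (Ioi s0) := by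
    exact Integrable.const_mul ((exp_neg_integrableOn_Ioi s0 hbg).congr_fun (fun x _ => by ring_nf) measurableSet_Ioi) (α*β)
  rw [integral_sub h1 h2, MeasureTheory.integral_const_mul, MeasureTheory.integral_const_mul, aux_int hβ, aux_int hbg]
  have e1 : Real.exp (-(β*s0)) = α ^ (-(β/γ)) := by
    rw [Real.rpow_def_of_pos hα0]
    rw [hs0]; ring
  have e2 : Real.exp (-((β+γ)*s0)) = α ^ (-(β/γ)) * α⁻¹ := by
    rw [show -((β+γ)*s0) = -(β*s0) + -(γ*s0) by ring, Real.exp_add, e1]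
    congr 1
    rw [show -(γ*s0) = -(Real.log α) by rw [hs0]; field_simp, Real.exp_neg, Real.exp_log hα0]
  rw [e1, e2]
  field_simp
  ring

end aux

/-- If `ξ ~ Exp(β)` and `η > 0` a.s. are independent with
`P(η > u) ≤ α e^{-γu}` for all `u ≥ 0`, then
`P(η < ξ) ≥ α^{-β/γ} γ/(β+γ)`. -/
theorem stmt_12 {Ω : Type*} [MeasurableSpace Ω] (P : Measure Ω)
    [IsProbabilityMeasure P]
    (α β γ : ℝ) (hα : 1 < α) (hβ : 0 < β) (hγ : 0 < γ)
    (ξ η : Ω → ℝ) (hξm : Measurable ξ) (hηm : Measurable η)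
    (hindep : IndepFun ξ η P)
    (hξ : Measure.map ξ P = expMeasure β)
    (hηpos : ∀ᵐ ω ∂P, 0 < η ω)
    (htail : ∀ u : ℝ, 0 ≤ u → P {ω | η ω > u} ≤ ENNReal.ofReal (α * Real.exp (-γ * u))) :
    P {ω | η ω < ξ ω} ≥ ENNReal.ofReal (α ^ (-(β / γ)) * (γ / (β + γ))) := by
  have hα0 : (0:ℝ) < α := lt_trans one_pos hα
  have hbg : (0:ℝ) < β + γ := by linarith
  set s0 := Real.log α / γ with hs0
  have hs0pos : 0 < s0 := div_pos (Real.log_pos hα) hγ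
  haveI : IsProbabilityMeasure (expMeasure β) := isProbabilityMeasure_expMeasure hβ
  set ν := Measure.map η P with hν
  haveI : IsProbabilityMeasure ν := Measure.isProbabilityMeasure_map hηm.aemeasurable
  -- Step A : P(η < ξ) = ∫⁻ ν(Iio t) dExp(β)
  have hS : MeasurableSet {p : ℝ × ℝ | p.2 < p.1} :=
    measurableSet_lt measurable_snd measurable_fst
  have hmap : Measure.map (fun ω => (ξ ω, η ω)) P = (expMeasure β).prod ν := by
    rw [← hξ, hν]
    exact (indepFun_iff_map_prod_eq_prod_map_map hξm.aemeasurable hηm.aemeasurable).mp hindep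
  have hA : P {ω | η ω < ξ ω} = ∫⁻ t, ν (Set.Iio t) ∂(expMeasure β) := by
    have h1 : P {ω | η ω < ξ ω}
        = Measure.map (fun ω => (ξ ω, η ω)) P {p : ℝ × ℝ | p.2 < p.1} := by
      rw [Measure.map_apply (hξm.prodMk hηm) hS]
      rfl
    rw [h1, hmap, Measure.prod_apply hS]
    rfl
  -- pointwise bound on α * exp(-(γ t)) for t > s0
  have hlt1 : ∀ t : ℝ, s0 < t → α * Real.exp (-(γ*t)) < 1 := by
    intro t ht
    have hlog : Real.log α < γ * t := by
      rw [hs0, div_lt_iff₀ hγ] at ht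
      linarith [ht]
    have h2 : Real.exp (-(γ*t)) < Real.exp (-(Real.log α)) :=
      Real.exp_lt_exp.mpr (by linarith)
    have h3 : Real.exp (-(Real.log α)) = α⁻¹ := by
      rw [Real.exp_neg, Real.exp_log hα0]
    calc α * Real.exp (-(γ*t)) < α * α⁻¹ := by
          rw [← h3]; exact (mul_lt_mul_iff_right₀ hα0).mpr h2
      _ = 1 := mul_inv_cancel₀ hα0.ne'
  -- Step B : indicator bound on ν (Iio t)
  have hB : ∀ t : ℝ,
      (Set.Ioi s0).indicator (fun t => ENNReal.ofReal (1 - α * Real.exp (-(γ*t)))) t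
        ≤ ν (Set.Iio t) := by
    intro t
    by_cases ht : t ∈ Set.Ioi s0
    · rw [Set.indicator_of_mem ht]
      have htpos : 0 < t := lt_trans hs0pos ht
      have htail' : P {ω | t ≤ η ω} ≤ ENNReal.ofReal (α * Real.exp (-(γ*t))) := by
        have hcont : Filter.Tendsto (fun u : ℝ => ENNReal.ofReal (α * Real.exp (-(γ*u))))
            (nhdsWithin t (Set.Iio t)) (nhds (ENNReal.ofReal (α * Real.exp (-(γ*t))))) := by
          apply Filter.Tendsto.mono_left _ nhdsWithin_le_nhds
          exact (ENNReal.continuous_ofReal.comp (by continuity)).tendsto t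
        refine ge_of_tendsto hcont ?_
        have hmem : Set.Ico 0 t ∈ nhdsWithin t (Set.Iio t) :=
          Ico_mem_nhdsLT htpos
        filter_upwards [hmem] with u hu
        have hsub : {ω | t ≤ η ω} ⊆ {ω | η ω > u} := fun ω hω =>
          lt_of_lt_of_le hu.2 hω
        calc P {ω | t ≤ η ω} ≤ P {ω | η ω > u} := measure_mono hsub
          _ ≤ ENNReal.ofReal (α * Real.exp (-γ * u)) := htail u hu.1
          _ = ENNReal.ofReal (α * Real.exp (-(γ * u))) := by rw [neg_mul]
      have hν_eq : ν (Set.Iio t) = 1 - P {ω | t ≤ η ω} := by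
        rw [hν, Measure.map_apply hηm measurableSet_Iio]
        have hset : η ⁻¹' Set.Iio t = {ω | t ≤ η ω}ᶜ := by
          ext ω; simp [Set.mem_Iio, not_le]
        have hms : MeasurableSet {ω | t ≤ η ω} := hηm measurableSet_Ici
        rw [hset, prob_compl_eq_one_sub hms]
      rw [hν_eq]
      have hexp_nonneg : 0 ≤ α * Real.exp (-(γ*t)) := by positivity
      calc ENNReal.ofReal (1 - α * Real.exp (-(γ*t)))
          = 1 - ENNReal.ofReal (α * Real.exp (-(γ*t))) := by
            rw [ENNReal.ofReal_sub _ hexp_nonneg, ENNReal.ofReal_one]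
        _ ≤ 1 - P {ω | t ≤ η ω} := tsub_le_tsub_left htail' 1
    · rw [Set.indicator_of_notMem ht]; exact zero_le
  rw [ge_iff_le, hA]
  have hC : ∫⁻ t in Set.Ioi s0, ENNReal.ofReal (1 - α * Real.exp (-(γ*t))) ∂(expMeasure β)
      ≤ ∫⁻ t, ν (Set.Iio t) ∂(expMeasure β) := by
    rw [← lintegral_indicator measurableSet_Ioi _]
    exact lintegral_mono hB
  refine le_trans (le_of_eq ?_) hC
  -- Step D : compute the integral
  have hgm : Measurable (fun t : ℝ => ENNReal.ofReal (1 - α * Real.exp (-(γ*t)))) :=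
    (measurable_const.sub (((measurable_id.const_mul γ).neg.exp).const_mul α)).ennreal_ofReal
  have hdm : Measurable (exponentialPDF β) :=
    (measurable_exponentialPDFReal β).ennreal_ofReal
  have hD : ∫⁻ t in Set.Ioi s0, ENNReal.ofReal (1 - α * Real.exp (-(γ*t))) ∂(expMeasure β)
      = ∫⁻ t in Set.Ioi s0,
          ENNReal.ofReal (β * Real.exp (-(β*t)) * (1 - α * Real.exp (-(γ*t)))) ∂volume := by
    have : expMeasure β = volume.withDensity (exponentialPDF β) := rfl
    rw [this, MeasureTheory.restrict_withDensity measurableSet_Ioi,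
      lintegral_withDensity_eq_lintegral_mul _ hdm hgm]
    refine setLIntegral_congr_fun measurableSet_Ioi ?_
    intro t ht
    have ht0 : (0:ℝ) ≤ t := le_of_lt (lt_trans hs0pos ht)
    simp only [Pi.mul_apply]
    rw [exponentialPDF_of_nonneg ht0, ← ENNReal.ofReal_mul (by positivity)]
  have hint : IntegrableOn
      (fun t => β * Real.exp (-(β*t)) * (1 - α * Real.exp (-(γ*t)))) (Set.Ioi s0) := by
    have h1 : IntegrableOn (fun t => β * Real.exp (-(β*t))) (Set.Ioi s0) :=
      Integrable.const_mul (by simpa [neg_mul, IntegrableOn] using exp_neg_integrableOn_Ioi s0 hβ) β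
    have h2 : IntegrableOn (fun t => (α*β) * Real.exp (-((β+γ)*t))) (Set.Ioi s0) :=
      Integrable.const_mul
        ((exp_neg_integrableOn_Ioi s0 hbg).congr_fun (fun x _ => by ring_nf)
          measurableSet_Ioi) (α*β)
    refine IntegrableOn.congr_fun (h1.sub h2) (fun t _ => ?_) measurableSet_Ioi
    simp only [Pi.sub_apply]
    rw [show -((β+γ)*t) = -(β*t) + -(γ*t) by ring, Real.exp_add]; ring
  have hnn : 0 ≤ᵐ[volume.restrict (Set.Ioi s0)]
      (fun t => β * Real.exp (-(β*t)) * (1 - α * Real.exp (-(γ*t)))) := by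
    rw [Filter.EventuallyLE, ae_restrict_iff' measurableSet_Ioi]
    refine Filter.Eventually.of_forall (fun t ht => ?_)
    have := hlt1 t ht
    have h1 : (0:ℝ) ≤ 1 - α * Real.exp (-(γ*t)) := by linarith
    positivity
  rw [hD, ← ofReal_integral_eq_lintegral_ofReal hint hnn, aux_val hα hβ hγ]
end

section
/- Fix constants α > 1 and β, γ > 0, and define θ(α, β, γ, a) = β/(β − a) − (a γ/((β − a)(β + γ − a))) · α^{-(β − a)/γ}. Let ξ and η be independent random variables on a probability space such that ξ has the exponential distribution with rate β, η > 0 almost surely, and P(η > u) ≤ α e^{-γ u} for all u ≥ 0. Then for every a ∈ [0, β + γ) with a ≠ β, the moment generating function of min(ξ, η) satisfies E[e^{a·min(ξ,η)}] ≤ θ(α, β, γ, a). -/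
open MeasureTheory ProbabilityTheory
open scoped ENNReal

open Set


lemma exp_tail_aux {Ω : Type*} [MeasurableSpace Ω] (P : Measure Ω) [IsProbabilityMeasure P]
    {β : ℝ} (hβ : 0 < β) {ξ : Ω → ℝ} (hξm : Measurable ξ)
    (hξ : Measure.map ξ P = expMeasure β) {u : ℝ} (hu : 0 ≤ u) :
    P (ξ ⁻¹' Set.Ioi u) = ENNReal.ofReal (Real.exp (-(β * u))) := by
  have hprob : IsProbabilityMeasure (expMeasure β) := isProbabilityMeasure_expMeasure hβ
  have hmap : P (ξ ⁻¹' Set.Ioi u) = expMeasure β (Set.Ioi u) := by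
    rw [← hξ, Measure.map_apply hξm measurableSet_Ioi]
  have hIic : expMeasure β (Set.Iic u) = ENNReal.ofReal (1 - Real.exp (-(β * u))) := by
    have h1 : cdf (expMeasure β) u = 1 - Real.exp (-(β * u)) := by
      rw [cdf_expMeasure_eq hβ, if_pos hu]
    have h2 : cdf (expMeasure β) u = (expMeasure β (Set.Iic u)).toReal :=
      cdf_eq_real _ u
    rw [← ENNReal.ofReal_toReal (measure_ne_top (expMeasure β) (Set.Iic u)), ← h2, h1]
  have hexp1 : Real.exp (-(β * u)) ≤ 1 := by
    rw [Real.exp_le_one_iff]; nlinarith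
  rw [hmap, ← Set.compl_Iic, measure_compl measurableSet_Iic (measure_ne_top _ _), hIic,
    measure_univ]
  rw [show (1 : ℝ≥0∞) = ENNReal.ofReal 1 by simp, ← ENNReal.ofReal_sub _ (by linarith)]
  norm_num

lemma algebra_aux {α β γ a : ℝ} (hα : 1 < α) (hβ : 0 < β) (hγ : 0 < γ)
    (ha : 0 < a) (hab : a ≠ β) (habg : a < β + γ) :
    1 + (((α ^ (a/γ) : ℝ) ^ ((-β/a) + 1) - (1:ℝ) ^ ((-β/a) + 1)) / ((-β/a) + 1)
      + α * (-((α ^ (a/γ) : ℝ) ^ ((-(β+γ)/a) + 1)) / ((-(β+γ)/a) + 1)))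
    = β / (β - a) - a * γ / ((β - a) * (β + γ - a)) * α ^ (-(β - a) / γ) := by
  have hα0 : (0:ℝ) < α := by linarith
  have ha0 : a ≠ 0 := ha.ne'
  set c : ℝ := α ^ ((a - β)/γ) with hc
  have he1 : (-β/a) + 1 = (a - β)/a := by field_simp; ring
  have he2 : (-(β+γ)/a) + 1 = (a - β - γ)/a := by field_simp; ring
  have ht1 : (α ^ (a/γ) : ℝ) ^ ((a-β)/a) = c := by
    rw [← Real.rpow_mul hα0.le, hc]
    congr 1
    field_simp
  have ht2 : (α ^ (a/γ) : ℝ) ^ ((a-β-γ)/a) = c / α := by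
    rw [← Real.rpow_mul hα0.le, hc]
    have : a / γ * ((a - β - γ) / a) = (a - β)/γ - 1 := by field_simp
    rw [this, Real.rpow_sub hα0, Real.rpow_one]
  have hrhs : α ^ (-(β - a) / γ) = c := by
    rw [hc]; congr 1; ring
  rw [he1, he2, ht1, ht2, hrhs, Real.one_rpow]
  have h1 : a - β ≠ 0 := sub_ne_zero.mpr hab
  have h2 : a - β - γ ≠ 0 := by intro h; nlinarith
  have h3 : β - a ≠ 0 := sub_ne_zero.mpr (Ne.symm hab)
  have h4 : β + γ - a ≠ 0 := by intro h; nlinarith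
  field_simp
  ring

/-- If `ξ ~ Exp(β)` and `η > 0` a.s. are independent with
`P(η > u) ≤ α e^{-γu}` for `u ≥ 0`, then for `a ∈ [0, β+γ)` with `a ≠ β`,
`E[e^{a min(ξ,η)}] ≤ θ(α,β,γ,a) := β/(β-a) - (aγ/((β-a)(β+γ-a))) α^{-(β-a)/γ}`. -/
theorem stmt_13 {Ω : Type*} [MeasurableSpace Ω] (P : Measure Ω)
    [IsProbabilityMeasure P]
    (α β γ : ℝ) (hα : 1 < α) (hβ : 0 < β) (hγ : 0 < γ)
    (θ : ℝ → ℝ → ℝ → ℝ → ℝ)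
    (hθ : ∀ α' β' γ' a, θ α' β' γ' a
      = β' / (β' - a) - a * γ' / ((β' - a) * (β' + γ' - a)) * α' ^ (-(β' - a) / γ'))
    (ξ η : Ω → ℝ) (hξm : Measurable ξ) (hηm : Measurable η)
    (hindep : IndepFun ξ η P)
    (hξ : Measure.map ξ P = expMeasure β)
    (hηpos : ∀ᵐ ω ∂P, 0 < η ω)
    (htail : ∀ u : ℝ, 0 ≤ u → P {ω | η ω > u} ≤ ENNReal.ofReal (α * Real.exp (-γ * u))) :
    ∀ a : ℝ, 0 ≤ a → a < β + γ → a ≠ β →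
      ∫⁻ ω, ENNReal.ofReal (Real.exp (a * min (ξ ω) (η ω))) ∂P
        ≤ ENNReal.ofReal (θ α β γ a) := by
  intro a ha0 hagb hab
  rcases eq_or_lt_of_le ha0 with h0 | ha
  · -- a = 0
    have hθ0 : θ α β γ a = 1 := by
      rw [hθ, ← h0]
      field_simp
      simp [hβ.ne']
    rw [hθ0, ← h0]
    simp
  -- main case 0 < a
  have hα0 : (0:ℝ) < α := by linarith
  have hm : Measurable fun ω => Real.exp (a * min (ξ ω) (η ω)) :=
    (Real.measurable_exp.comp ((hξm.min hηm).const_mul a))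
  rw [lintegral_eq_lintegral_meas_lt P (Filter.Eventually.of_forall fun ω => (Real.exp_pos _).le)
    hm.aemeasurable]
  set t₀ : ℝ := α ^ (a/γ) with ht₀def
  have ht₀1 : 1 < t₀ := Real.one_lt_rpow_iff_of_pos hα0 |>.mpr (Or.inl ⟨hα, by positivity⟩)
  have ht₀0 : 0 < t₀ := by linarith
  -- key set identity
  have hkey : ∀ t : ℝ, 1 < t → {ω | t < Real.exp (a * min (ξ ω) (η ω))}
      = ξ ⁻¹' Ioi (Real.log t / a) ∩ η ⁻¹' Ioi (Real.log t / a) := by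
    intro t ht
    have h0t : (0:ℝ) < t := by linarith
    ext ω
    simp only [Set.mem_setOf_eq, Set.mem_inter_iff, Set.mem_preimage, Set.mem_Ioi]
    rw [← Real.log_lt_iff_lt_exp h0t, mul_comm, ← div_lt_iff₀ ha, lt_min_iff]
  -- tail bounds
  have hb1 : ∀ t : ℝ, 1 < t → P {ω | t < Real.exp (a * min (ξ ω) (η ω))}
      ≤ ENNReal.ofReal (t ^ (-β/a)) := by
    intro t ht
    have h0t : (0:ℝ) < t := by linarith
    have hu : 0 ≤ Real.log t / a := div_nonneg (Real.log_nonneg ht.le) ha.le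
    rw [hkey t ht]
    calc P (ξ ⁻¹' Ioi (Real.log t / a) ∩ η ⁻¹' Ioi (Real.log t / a))
        ≤ P (ξ ⁻¹' Ioi (Real.log t / a)) := measure_mono Set.inter_subset_left
      _ = ENNReal.ofReal (Real.exp (-(β * (Real.log t / a)))) := exp_tail_aux P hβ hξm hξ hu
      _ = ENNReal.ofReal (t ^ (-β/a)) := by
          congr 1
          rw [Real.rpow_def_of_pos h0t]
          congr 1
          ring
  have hb2 : ∀ t : ℝ, 1 < t → P {ω | t < Real.exp (a * min (ξ ω) (η ω))}
      ≤ ENNReal.ofReal (α * t ^ (-(β+γ)/a)) := by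
    intro t ht
    have h0t : (0:ℝ) < t := by linarith
    have hu : 0 ≤ Real.log t / a := div_nonneg (Real.log_nonneg ht.le) ha.le
    rw [hkey t ht,
      hindep.measure_inter_preimage_eq_mul _ _ measurableSet_Ioi measurableSet_Ioi,
      exp_tail_aux P hβ hξm hξ hu]
    have hη' : P (η ⁻¹' Ioi (Real.log t / a))
        ≤ ENNReal.ofReal (α * Real.exp (-γ * (Real.log t / a))) := htail _ hu
    calc ENNReal.ofReal (Real.exp (-(β * (Real.log t / a)))) * P (η ⁻¹' Ioi (Real.log t / a))
        ≤ ENNReal.ofReal (Real.exp (-(β * (Real.log t / a))))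
            * ENNReal.ofReal (α * Real.exp (-γ * (Real.log t / a))) :=
          mul_le_mul_right hη' _
      _ = ENNReal.ofReal (Real.exp (-(β * (Real.log t / a)))
            * (α * Real.exp (-γ * (Real.log t / a)))) :=
          (ENNReal.ofReal_mul (Real.exp_nonneg _)).symm
      _ = ENNReal.ofReal (α * t ^ (-(β+γ)/a)) := by
          congr 1
          rw [Real.rpow_def_of_pos h0t, show Real.log t * (-(β+γ)/a)
            = (-(β * (Real.log t / a))) + (-γ * (Real.log t / a)) by ring, Real.exp_add]
          ring
  -- split the domain
  have hsplit1 : Ioi (0:ℝ) = Ioc 0 1 ∪ Ioi 1 := (Ioc_union_Ioi_eq_Ioi zero_le_one).symm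
  have hsplit2 : Ioi (1:ℝ) = Ioc 1 t₀ ∪ Ioi t₀ := (Ioc_union_Ioi_eq_Ioi ht₀1.le).symm
  rw [hsplit1, lintegral_union measurableSet_Ioi Ioc_disjoint_Ioi_same, hsplit2,
    lintegral_union measurableSet_Ioi Ioc_disjoint_Ioi_same]
  -- piece 1
  have hp1 : ∫⁻ t in Ioc (0:ℝ) 1, P {ω | t < Real.exp (a * min (ξ ω) (η ω))} ≤ 1 := by
    calc ∫⁻ t in Ioc (0:ℝ) 1, P {ω | t < Real.exp (a * min (ξ ω) (η ω))}
        ≤ ∫⁻ _ in Ioc (0:ℝ) 1, 1 := lintegral_mono fun t => prob_le_one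
      _ = 1 := by simp [Real.volume_Ioc]
  -- piece 2
  have hmono2 : ∫⁻ t in Ioc (1:ℝ) t₀, P {ω | t < Real.exp (a * min (ξ ω) (η ω))}
      ≤ ∫⁻ t in Ioc (1:ℝ) t₀, ENNReal.ofReal (t ^ (-β/a)) :=
    setLIntegral_mono' measurableSet_Ioc fun t ht => hb1 t ht.1
  have hcont2 : ContinuousOn (fun t : ℝ => t ^ (-β/a)) (Icc 1 t₀) := fun x hx =>
    (Real.continuousAt_rpow_const x _ (Or.inl (by linarith [hx.1]))).continuousWithinAt
  have hint2 : IntegrableOn (fun t : ℝ => t ^ (-β/a)) (Ioc 1 t₀) :=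
    (hcont2.integrableOn_Icc).mono_set Ioc_subset_Icc_self
  have heq2 : ∫⁻ t in Ioc (1:ℝ) t₀, ENNReal.ofReal (t ^ (-β/a))
      = ENNReal.ofReal (∫ t in Ioc (1:ℝ) t₀, t ^ (-β/a)) :=
    (ofReal_integral_eq_lintegral_ofReal hint2
      ((ae_restrict_iff' measurableSet_Ioc).mpr (Filter.Eventually.of_forall
        fun x hx => Real.rpow_nonneg (by linarith [hx.1]) _))).symm
  have hval2 : ∫ t in Ioc (1:ℝ) t₀, t ^ (-β/a)
      = (t₀ ^ ((-β/a) + 1) - (1:ℝ) ^ ((-β/a) + 1)) / ((-β/a) + 1) := by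
    rw [← intervalIntegral.integral_of_le ht₀1.le]
    rw [integral_rpow (Or.inr ⟨by
      intro h
      apply hab
      field_simp at h
      linarith, by
      intro h
      rw [Set.uIcc_of_le ht₀1.le, Set.mem_Icc] at h
      linarith [h.1]⟩)]
  -- piece 3
  have hq : -(β+γ)/a < -1 := by rw [div_lt_iff₀ ha]; linarith
  have hmono3 : ∫⁻ t in Ioi t₀, P {ω | t < Real.exp (a * min (ξ ω) (η ω))}
      ≤ ∫⁻ t in Ioi t₀, ENNReal.ofReal (α * t ^ (-(β+γ)/a)) :=
    setLIntegral_mono' measurableSet_Ioi fun t ht => hb2 t (by exact lt_trans ht₀1 ht)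
  have hint3 : IntegrableOn (fun t : ℝ => α * t ^ (-(β+γ)/a)) (Ioi t₀) :=
    (integrableOn_Ioi_rpow_of_lt hq ht₀0).const_mul α
  have heq3 : ∫⁻ t in Ioi t₀, ENNReal.ofReal (α * t ^ (-(β+γ)/a))
      = ENNReal.ofReal (∫ t in Ioi t₀, α * t ^ (-(β+γ)/a)) :=
    (ofReal_integral_eq_lintegral_ofReal hint3
      ((ae_restrict_iff' measurableSet_Ioi).mpr (Filter.Eventually.of_forall
        fun x hx => mul_nonneg hα0.le (Real.rpow_nonneg (by linarith [mem_Ioi.mp hx]) _)))).symm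
  have hval3 : ∫ t in Ioi t₀, α * t ^ (-(β+γ)/a)
      = α * (-(t₀ ^ ((-(β+γ)/a) + 1)) / ((-(β+γ)/a) + 1)) := by
    rw [MeasureTheory.integral_const_mul, integral_Ioi_rpow_of_lt hq ht₀0]
  -- nonnegativity of the two real integrals
  have hA : 0 ≤ ∫ t in Ioc (1:ℝ) t₀, t ^ (-β/a) :=
    setIntegral_nonneg measurableSet_Ioc fun x hx => Real.rpow_nonneg (by linarith [hx.1]) _
  have hB : 0 ≤ ∫ t in Ioi t₀, α * t ^ (-(β+γ)/a) :=
    setIntegral_nonneg measurableSet_Ioi fun x hx =>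
      mul_nonneg hα0.le (Real.rpow_nonneg (by linarith [mem_Ioi.mp hx]) _)
  -- combine
  calc (∫⁻ t in Ioc (0:ℝ) 1, P {ω | t < Real.exp (a * min (ξ ω) (η ω))})
        + ((∫⁻ t in Ioc (1:ℝ) t₀, P {ω | t < Real.exp (a * min (ξ ω) (η ω))})
          + ∫⁻ t in Ioi t₀, P {ω | t < Real.exp (a * min (ξ ω) (η ω))})
      ≤ 1 + (ENNReal.ofReal (∫ t in Ioc (1:ℝ) t₀, t ^ (-β/a))
          + ENNReal.ofReal (∫ t in Ioi t₀, α * t ^ (-(β+γ)/a))) :=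
        add_le_add hp1 (add_le_add (hmono2.trans heq2.le) (hmono3.trans heq3.le))
    _ = ENNReal.ofReal (1 + ((∫ t in Ioc (1:ℝ) t₀, t ^ (-β/a))
          + (∫ t in Ioi t₀, α * t ^ (-(β+γ)/a)))) := by
        rw [ENNReal.ofReal_add zero_le_one (by positivity), ENNReal.ofReal_add hA hB,
          ENNReal.ofReal_one]
    _ = ENNReal.ofReal (θ α β γ a) := by
        rw [hval2, hval3, hθ, ← algebra_aux hα hβ hγ ha hab hagb]
end
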